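/- arXiv:1604.05856 — 8 statements merged into one kernel-verified Lean document; each statement's English description precedes it below -/
import Mathlib

section
/- Let M be an n×n quaternionic matrix and λ ∈ ℂ. Then λ is an eigenvalue of the complex 2n×2n matrix ψ(M) (i.e. det(λ·I_{2n} − ψ(M)) = 0) if and only if the complex conjugate of λ is an eigenvalue of ψ(M). In particular the 2n complex eigenvalues of ψ(M) counted with multiplicity appear in complex conjugate pairs. -/
noncomputable section

/-- Simplex part of a quaternion: `q = Sc q + j * Pc q`. -/
def Sc (q : Quaternion ℝ) : ℂ := ⟨q.re, q.imI⟩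

/-- Perplex part of a quaternion: `q = Sc q + j * Pc q`. -/
def Pc (q : Quaternion ℝ) : ℂ := ⟨q.imJ, -q.imK⟩

/-- The map ψ sending a quaternionic matrix `M = M^S + j·M^P` (symplectic decomposition)
to the complex block matrix `[[M^S, -conj(M^P)], [M^P, conj(M^S)]]`. -/
def psi {I J : Type*} (M : Matrix I J (Quaternion ℝ)) :
    Matrix (I ⊕ I) (J ⊕ J) ℂ :=
  Matrix.fromBlocks (M.map Sc) (-((M.map Pc).map (starRingEnd ℂ)))
    (M.map Pc) ((M.map Sc).map (starRingEnd ℂ))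

/-! `ψ(M)` is conjugate by the symplectic matrix `J = [[0, -1], [1, 0]]` to its entrywise complex
conjugate, so its characteristic polynomial has real coefficients and its roots are closed under
conjugation. -/

open Matrix Polynomial

namespace Polynomial

variable {p : ℂ[X]}

theorem isRoot_conj_iff_of_map_conj (hp : p.map (starRingEnd ℂ) = p) (z : ℂ) :
    p.IsRoot (starRingEnd ℂ z) ↔ p.IsRoot z := by
  conv_lhs => rw [← hp]
  rw [IsRoot, eval_map, eval₂_at_apply, map_eq_zero, IsRoot]

theorem roots_map_conj_of_map_conj (hp : p.map (starRingEnd ℂ) = p) :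
    p.roots.map (starRingEnd ℂ) = p.roots := by
  conv_rhs => rw [← hp]
  exact ((IsAlgClosed.splits p).roots_map_of_injective (starRingEnd ℂ).injective).symm

end Polynomial

section Psi

variable {I : Type*} [Fintype I] [DecidableEq I]

theorem J_mul_psi (M : Matrix I I (Quaternion ℝ)) :
    J I ℂ * psi M = (psi M).map (starRingEnd ℂ) * J I ℂ := by
  ext (i | i) (j | j) <;>
    simp [J, psi, fromBlocks_multiply, fromBlocks_map, Matrix.map_map, Function.comp_def]

theorem charpoly_psi_map_conj (M : Matrix I I (Quaternion ℝ)) :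
    (psi M).charpoly.map (starRingEnd ℂ) = (psi M).charpoly := by
  obtain ⟨u, hu⟩ := (isUnit_iff_isUnit_det _).mpr (isUnit_det_J I ℂ)
  have hconj : (psi M).map (starRingEnd ℂ) = u.val * psi M * u.val⁻¹ := by
    rw [hu, J_mul_psi, Matrix.mul_assoc,
      mul_nonsing_inv _ (isUnit_det_J I ℂ), Matrix.mul_one]
  rw [← charpoly_map, hconj, charpoly_units_conj]

end Psi

/-- for an n×n quaternionic matrix M, a complex number λ is an eigenvalue of
ψ(M) iff its complex conjugate is; in particular the 2n complex eigenvalues of ψ(M)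
(counted with multiplicity, i.e. the roots of its characteristic polynomial) come in
complex conjugate pairs. -/
theorem psi_eigenvalues_conj_pairs (n : ℕ) (M : Matrix (Fin n) (Fin n) (Quaternion ℝ)) :
    (∀ lam : ℂ,
      (lam • (1 : Matrix (Fin n ⊕ Fin n) (Fin n ⊕ Fin n) ℂ) - psi M).det = 0 ↔
      ((starRingEnd ℂ) lam • (1 : Matrix (Fin n ⊕ Fin n) (Fin n ⊕ Fin n) ℂ) - psi M).det = 0) ∧
    Multiset.card (Matrix.charpoly (psi M)).roots = 2 * n ∧
    ((Matrix.charpoly (psi M)).roots.map (starRingEnd ℂ) = (Matrix.charpoly (psi M)).roots) := by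
  have hreal := charpoly_psi_map_conj M
  have hdet : ∀ z : ℂ, (z • (1 : Matrix (Fin n ⊕ Fin n) (Fin n ⊕ Fin n) ℂ) - psi M).det
      = (psi M).charpoly.eval z := by
    intro z
    rw [eval_charpoly, smul_one_eq_diagonal, scalar_apply]
  refine ⟨fun z => ?_, ?_, roots_map_conj_of_map_conj hreal⟩
  · rw [hdet, hdet]
    exact (isRoot_conj_iff_of_map_conj hreal z).symm
  · rw [← (IsAlgClosed.splits _).natDegree_eq_card_roots, charpoly_natDegree_eq_dim]
    simp [two_mul]
end
end

section
/- Let M be an n×n quaternionic matrix and λ ∈ ℂ ⊆ ℍ. Then λ is a right eigenvalue of M, i.e. there exists a nonzero column vector v ∈ ℍⁿ with M·v = v·λ (scalar acting on the right), if and only if det(λ·I_{2n} − ψ(M)) = 0. -/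
noncomputable section

/-- The canonical embedding of ℂ into the quaternions (real span of 1 and i). -/
def toQuat (z : ℂ) : Quaternion ℝ := ⟨z.re, z.im, 0, 0⟩

/-!
Writing `v = v^S + j·v^P` with complex `v^S, v^P`, the map `v ↦ (v^S, v^P)` is an additive
bijection `ℍⁿ ≃ ℂ²ⁿ` that turns `v ↦ M·v` into `w ↦ ψ(M)·w` (because `j·z = conj z·j` for `z ∈ ℂ`)
and `v ↦ v·λ` into `w ↦ λ·w` for `λ ∈ ℂ`. Hence quaternionic right eigenvectors of `M` for `λ`
correspond to complex eigenvectors of `ψ(M)` for `λ`, which exist iff `det(λ − ψ(M)) = 0`.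
-/

open Quaternion Matrix

lemma Sc_add (p q : ℍ) : Sc (p + q) = Sc p + Sc q := by
  simp [Sc, Complex.ext_iff]

lemma Pc_add (p q : ℍ) : Pc (p + q) = Pc p + Pc q := by
  simp [Pc, Complex.ext_iff]; ring

lemma Sc_sum {ι : Type*} (s : Finset ι) (f : ι → ℍ) : Sc (∑ i ∈ s, f i) = ∑ i ∈ s, Sc (f i) :=
  map_sum (AddMonoidHom.mk' Sc Sc_add) f s

lemma Pc_sum {ι : Type*} (s : Finset ι) (f : ι → ℍ) : Pc (∑ i ∈ s, f i) = ∑ i ∈ s, Pc (f i) :=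
  map_sum (AddMonoidHom.mk' Pc Pc_add) f s

lemma Sc_mul (p q : ℍ) : Sc (p * q) = Sc p * Sc q - starRingEnd ℂ (Pc p) * Pc q := by
  simp only [Sc, Pc, Complex.ext_iff, re_mul, imI_mul, Complex.mul_re,
    Complex.mul_im, Complex.sub_re, Complex.sub_im, Complex.conj_re, Complex.conj_im]
  constructor <;> ring

lemma Pc_mul (p q : ℍ) : Pc (p * q) = Pc p * Sc q + starRingEnd ℂ (Sc p) * Pc q := by
  simp only [Sc, Pc, Complex.ext_iff, imJ_mul, imK_mul, Complex.mul_re,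
    Complex.mul_im, Complex.add_re, Complex.add_im, Complex.conj_re, Complex.conj_im]
  constructor <;> ring

lemma Sc_toQuat (z : ℂ) : Sc (toQuat z) = z := rfl

lemma Pc_toQuat (z : ℂ) : Pc (toQuat z) = 0 := by
  simp [Pc, toQuat, Complex.ext_iff]

lemma Sc_mul_toQuat (q : ℍ) (z : ℂ) : Sc (q * toQuat z) = Sc q * z := by
  simp [Sc_mul, Sc_toQuat, Pc_toQuat]

lemma Pc_mul_toQuat (q : ℍ) (z : ℂ) : Pc (q * toQuat z) = Pc q * z := by
  simp [Pc_mul, Sc_toQuat, Pc_toQuat]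

section

variable {I : Type*}

def symplecticVec : (I → ℍ) ≃+ (I ⊕ I → ℂ) where
  toFun v := Sum.elim (fun r => Sc (v r)) (fun r => Pc (v r))
  invFun w r := ⟨(w (.inl r)).re, (w (.inl r)).im, (w (.inr r)).re, -(w (.inr r)).im⟩
  left_inv v := funext fun r => by ext <;> simp [Sc, Pc]
  right_inv w := funext fun x => by cases x <;> simp [Sc, Pc]
  map_add' v w := funext fun x => by cases x <;> simp [Sc_add, Pc_add]

@[simp] lemma symplecticVec_inl (v : I → ℍ) (r : I) :
    symplecticVec v (.inl r) = Sc (v r) := rfl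

@[simp] lemma symplecticVec_inr (v : I → ℍ) (r : I) :
    symplecticVec v (.inr r) = Pc (v r) := rfl

lemma psi_mulVec_symplecticVec {J : Type*} [Fintype J] (M : Matrix I J ℍ) (v : J → ℍ) :
    psi M *ᵥ symplecticVec v = symplecticVec (M *ᵥ v) := by
  funext x
  cases x <;> simp [psi, mulVec, dotProduct, Fintype.sum_sum_type, Sc_sum, Pc_sum, Sc_mul, Pc_mul,
    Finset.sum_add_distrib, sub_eq_add_neg]

lemma symplecticVec_mul_toQuat (v : I → ℍ) (z : ℂ) :
    symplecticVec (fun r => v r * toQuat z) = z • symplecticVec v := by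
  funext x
  cases x <;> simp [Sc_mul_toQuat, Pc_mul_toQuat, mul_comm]

end

/-- for an n×n quaternionic matrix M and λ ∈ ℂ ⊆ ℍ, λ is a right eigenvalue
of M (there is a nonzero v ∈ ℍⁿ with M·v = v·λ, the scalar acting on the right) iff
det(λ·I_{2n} − ψ(M)) = 0. -/
theorem right_eigenvalue_iff_psi (n : ℕ) (M : Matrix (Fin n) (Fin n) (Quaternion ℝ))
    (lam : ℂ) :
    (∃ v : Fin n → Quaternion ℝ, v ≠ 0 ∧ M.mulVec v = fun r => v r * toQuat lam) ↔
    (lam • (1 : Matrix (Fin n ⊕ Fin n) (Fin n ⊕ Fin n) ℂ) - psi M).det = 0 := by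
  rw [← exists_mulVec_eq_zero_iff]
  refine symplecticVec.toEquiv.exists_congr fun v => and_congr ?_ ?_
  · exact (map_ne_zero_iff symplecticVec symplecticVec.injective).symm
  · change _ ↔ (lam • 1 - psi M) *ᵥ symplecticVec v = 0
    rw [sub_mulVec, smul_mulVec, one_mulVec, sub_eq_zero, psi_mulVec_symplecticVec,
      ← symplecticVec_mul_toQuat, symplecticVec.injective.eq_iff, eq_comm]
end
end

section
/- Let G be a finite connected simple graph, q : D(G) → ℍ a map, and U the quaternionic transition matrix determined by q. Write q(e) = q₀(e) + q₁(e)i + q₂(e)j + q₃(e)k with real q₀(e), q₁(e), q₂(e), q₃(e). Then U is quaternionic unitary (U*·U = U·U* = I) if and only if for every arc e ∈ D(G) one has q₀(e)² + q₁(e)² + q₂(e)² + q₃(e)² − 2q₀(e)/d_{o(e)} = 0, and q(e) = q(f) for any two arcs e, f ∈ D(G) with o(e) = o(f). -/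
noncomputable section

variable {V : Type*}

/-- The quaternionic transition matrix determined by `q : D(G) → ℍ`:
`U e f = q(e)` if `t(f) = o(e)` and `f ≠ e⁻¹`, `U e f = q(e) − 1` if `f = e⁻¹`,
`0` otherwise. -/
def quatTransition [Fintype V] [DecidableEq V] (G : SimpleGraph V) [DecidableRel G.Adj]
    (q : G.Dart → Quaternion ℝ) : Matrix G.Dart G.Dart (Quaternion ℝ) := fun e f =>
  if f = e.symm then q e - 1
  else if f.toProd.2 = e.toProd.1 then q e else 0

/-!
Write `U = diag(q) S - J`, where `S e f = [t(f) = o(e)]` and `J` is the permutation matrix of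
`e ↦ e⁻¹`. With `P e e' = [o(e) = o(e')]` one has `S J = J S* = P`, `S S* = diag(d_{o(e)}) P`
and `J² = 1`, hence
`(U U*) e e' = δ e e' + [o(e) = o(e')] (d_{o(e)} q(e) q(e')* - q(e) - q(e')*)`.
Square matrices over a division ring are Dedekind-finite, so `U U* = 1` already forces
`U* U = 1`. Inside one fibre of `o`, `d a b* = a + b*` and `d a a* = a + a*` give
`(d a - 1)(b* - a*) = 0`, and `d a = 1` would force `a = 0`; so `q` is constant on the fibre,
and `d a a* = a + a*` is the real equation `d |a|² = 2 Re a`.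
-/

open Matrix Finset

namespace SimpleGraph

theorem Dart.eq_symm_comm {G : SimpleGraph V} {e f : G.Dart} : e = f.symm ↔ f = e.symm :=
  eq_comm.trans Dart.symm_involutive.eq_iff

theorem card_dart_snd_eq [Fintype V] [DecidableEq V] {G : SimpleGraph V} [DecidableRel G.Adj]
    (v : V) : #{d : G.Dart | d.snd = v} = G.degree v := by
  rw [← G.dart_fst_fiber_card_eq_degree v]
  exact card_nbij' Dart.symm Dart.symm (by simp [Set.MapsTo]) (by simp [Set.MapsTo])
    (fun d _ => d.symm_symm) (fun d _ => d.symm_symm)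

section DartMatrices

variable [DecidableEq V] (G : SimpleGraph V) (R : Type*)

def dartPredMatrix [Zero R] [One R] : Matrix G.Dart G.Dart R :=
  of fun e f => if f.snd = e.fst then 1 else 0

def dartFstEqMatrix [Zero R] [One R] : Matrix G.Dart G.Dart R :=
  of fun e e' => if e.fst = e'.fst then 1 else 0

def dartSymmMatrix [Zero R] [One R] : Matrix G.Dart G.Dart R :=
  (Dart.symm_involutive.toPerm _).toPEquiv.toMatrix

variable {G R}

theorem dartSymmMatrix_apply [Zero R] [One R] (e f : G.Dart) :
    G.dartSymmMatrix R e f = if f = e.symm then 1 else 0 := by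
  simp [dartSymmMatrix, PEquiv.toMatrix_apply, eq_comm]

theorem conjTranspose_dartSymmMatrix [Semiring R] [StarRing R] :
    (G.dartSymmMatrix R)ᴴ = G.dartSymmMatrix R := by
  ext e f
  simp [dartSymmMatrix_apply, apply_ite star, Dart.eq_symm_comm]

variable [Fintype V] [DecidableRel G.Adj]

theorem dartSymmMatrix_mul_self [NonAssocSemiring R] :
    G.dartSymmMatrix R * G.dartSymmMatrix R = 1 := by
  ext e f
  simp [dartSymmMatrix, PEquiv.mul_toMatrix_toPEquiv, one_apply, PEquiv.toMatrix_apply,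
    Dart.symm_involutive.injective.eq_iff]

theorem dartPredMatrix_mul_dartSymmMatrix [NonAssocSemiring R] :
    G.dartPredMatrix R * G.dartSymmMatrix R = G.dartFstEqMatrix R := by
  ext e f
  simp [dartSymmMatrix, PEquiv.mul_toMatrix_toPEquiv, dartPredMatrix, dartFstEqMatrix, eq_comm]

theorem dartSymmMatrix_mul_conjTranspose_dartPredMatrix [Semiring R] [StarRing R] :
    G.dartSymmMatrix R * (G.dartPredMatrix R)ᴴ = G.dartFstEqMatrix R := by
  ext e f
  simp [dartSymmMatrix, PEquiv.toMatrix_toPEquiv_mul, dartPredMatrix, dartFstEqMatrix,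
    apply_ite star]

theorem dartPredMatrix_mul_conjTranspose [Semiring R] [StarRing R] :
    G.dartPredMatrix R * (G.dartPredMatrix R)ᴴ =
      diagonal (fun e => (G.degree e.fst : R)) * G.dartFstEqMatrix R := by
  ext e e'
  rw [diagonal_mul, mul_apply]
  simp only [dartPredMatrix, dartFstEqMatrix, conjTranspose_apply, of_apply, apply_ite star,
    star_one, star_zero, mul_ite, mul_one, mul_zero, ← ite_and]
  split_ifs with h
  · simp [← h, sum_boole, card_dart_snd_eq]
  · exact sum_eq_zero fun f _ => if_neg fun hf => h (hf.2.symm.trans hf.1)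

end DartMatrices

end SimpleGraph

theorem eq_of_mul_star_eq_add_star {R : Type*} [DivisionRing R] [StarRing R] {d a b : R}
    (hab : d * a * star b = a + star b) (haa : d * a * star a = a + star a) : a = b := by
  have h : (d * a - 1) * (star b - star a) = 0 := by
    rw [mul_sub, sub_mul, sub_mul, one_mul, one_mul, hab, haa]
    abel
  rcases mul_eq_zero.mp h with hda | hba
  · rw [sub_eq_zero.mp hda, one_mul, right_eq_add] at hab
    simp [hab] at hda
  · exact (star_injective (sub_eq_zero.mp hba)).symm

theorem forall_mul_star_eq_add_star_iff {ι α R : Type*} [DivisionRing R] [StarRing R]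
    (o : ι → α) (d : α → R) (q : ι → R) :
    (∀ e e', o e = o e' → d (o e) * q e * star (q e') = q e + star (q e')) ↔
      (∀ e, d (o e) * q e * star (q e) = q e + star (q e)) ∧
        ∀ e e', o e = o e' → q e = q e' := by
  refine ⟨fun h => ⟨fun e => h e e rfl, fun e e' he => ?_⟩, fun ⟨hdiag, hconst⟩ e e' he => ?_⟩
  · exact eq_of_mul_star_eq_add_star (h e e' he) (h e e rfl)
  · rw [← hconst e e' he]
    exact hdiag e

theorem Quaternion.coe_mul_mul_star_eq_add_star_iff {d : ℝ} (hd : d ≠ 0) (a : Quaternion ℝ) :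
    (d : Quaternion ℝ) * a * star a = a + star a ↔
      a.re ^ 2 + a.imI ^ 2 + a.imJ ^ 2 + a.imK ^ 2 - 2 * a.re / d = 0 := by
  rw [mul_assoc, self_mul_star, self_add_star', ← coe_mul, coe_inj, ← normSq_def', sub_eq_zero,
    eq_div_iff hd, mul_comm]

section QuatTransition

open SimpleGraph

variable [Fintype V] [DecidableEq V] (G : SimpleGraph V) [DecidableRel G.Adj]
  (q : G.Dart → Quaternion ℝ)

theorem quatTransition_eq_diagonal_mul_sub :
    quatTransition G q = diagonal q * G.dartPredMatrix _ - G.dartSymmMatrix _ := by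
  refine Matrix.ext fun e f => ?_
  by_cases h : f = e.symm <;>
    simp [quatTransition, h, diagonal_mul, dartPredMatrix, dartSymmMatrix_apply]

theorem quatTransition_mul_conjTranspose :
    quatTransition G q * (quatTransition G q)ᴴ =
      of (fun e e' => if e.fst = e'.fst then
        (G.degree e.fst : Quaternion ℝ) * q e * star (q e') - q e - star (q e') else 0) + 1 := by
  set S := G.dartPredMatrix (Quaternion ℝ)
  set J := G.dartSymmMatrix (Quaternion ℝ)
  rw [quatTransition_eq_diagonal_mul_sub, conjTranspose_sub, conjTranspose_mul,
    diagonal_conjTranspose, conjTranspose_dartSymmMatrix]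
  calc (diagonal q * S - J) * (Sᴴ * diagonal (star q) - J)
      = diagonal q * (S * Sᴴ) * diagonal (star q) - diagonal q * (S * J)
          - J * Sᴴ * diagonal (star q) + J * J := by noncomm_ring
    _ = _ := by
      rw [dartPredMatrix_mul_conjTranspose, dartPredMatrix_mul_dartSymmMatrix,
        dartSymmMatrix_mul_conjTranspose_dartPredMatrix, dartSymmMatrix_mul_self]
      ext1 e e'
      by_cases h : e.fst = e'.fst
      · simp [h, dartFstEqMatrix, diagonal_mul, mul_diagonal, (Nat.cast_commute _ _).eq]
      · simp [h, dartFstEqMatrix]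

theorem quatTransition_mul_conjTranspose_eq_one_iff :
    quatTransition G q * (quatTransition G q)ᴴ = 1 ↔
      ∀ e e' : G.Dart, e.fst = e'.fst →
        (G.degree e.fst : Quaternion ℝ) * q e * star (q e') = q e + star (q e') := by
  rw [quatTransition_mul_conjTranspose, add_eq_right, ← Matrix.ext_iff]
  simp only [of_apply, Matrix.zero_apply, ite_eq_right_iff, sub_sub, sub_eq_zero]

end QuatTransition

theorem quatTransition_unitary_iff_general [Fintype V] [DecidableEq V] (G : SimpleGraph V)
    [DecidableRel G.Adj] (q : G.Dart → Quaternion ℝ) :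
    (star (quatTransition G q) * quatTransition G q = 1 ∧
     quatTransition G q * star (quatTransition G q) = 1) ↔
    ((∀ e : G.Dart,
        (q e).re ^ 2 + (q e).imI ^ 2 + (q e).imJ ^ 2 + (q e).imK ^ 2 -
          2 * (q e).re / (G.degree e.toProd.1 : ℝ) = 0) ∧
     (∀ e f : G.Dart, e.toProd.1 = f.toProd.1 → q e = q f)) := by
  have hdeg (e : G.Dart) : (G.degree e.fst : ℝ) ≠ 0 :=
    Nat.cast_ne_zero.mpr ((G.degree_pos_iff_exists_adj _).mpr ⟨_, e.adj⟩).ne'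
  rw [star_eq_conjTranspose, mul_eq_one_comm, and_self,
    quatTransition_mul_conjTranspose_eq_one_iff,
    forall_mul_star_eq_add_star_iff (fun e : G.Dart => e.fst) (fun v => (G.degree v : Quaternion ℝ))]
  simp only [← Quaternion.coe_natCast, Quaternion.coe_mul_mul_star_eq_add_star_iff (hdeg _)]

/-- Konno–Mitsuhashi–Sato: the quaternionic transition matrix U is
quaternionic unitary iff `q₀(e)² + q₁(e)² + q₂(e)² + q₃(e)² − 2q₀(e)/d_{o(e)} = 0` for
every arc e, and `q(e) = q(f)` whenever `o(e) = o(f)`. -/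
theorem quatTransition_unitary_iff [Fintype V] [DecidableEq V] (G : SimpleGraph V)
    [DecidableRel G.Adj] (hG : G.Connected) (q : G.Dart → Quaternion ℝ) :
    (star (quatTransition G q) * quatTransition G q = 1 ∧
     quatTransition G q * star (quatTransition G q) = 1) ↔
    ((∀ e : G.Dart,
        (q e).re ^ 2 + (q e).imI ^ 2 + (q e).imJ ^ 2 + (q e).imK ^ 2 -
          2 * (q e).re / (G.degree e.toProd.1 : ℝ) = 0) ∧
     (∀ e f : G.Dart, e.toProd.1 = f.toProd.1 → q e = q f)) :=
  quatTransition_unitary_iff_general G q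
end
end

section
/- Let G be a finite connected simple graph, q : D(G) → ℍ a map, and U the quaternionic transition matrix determined by q. If U is quaternionic unitary, then for every arc e ∈ D(G), the real part q₀(e) of q(e) satisfies 0 ≤ q₀(e) ≤ 2/d_{o(e)}. -/
/-!
Unitarity makes every row of `U` a unit vector. The row of an arc `e` has the entry `q(e) - 1`
at `e⁻¹`, the entry `q(e)` at the `d - 1` other arcs ending in `o(e)`, and zeros elsewhere, where
`d = d_{o(e)}`. Expanding `|q - 1|² = |q|² - 2 q₀ + 1`, the row norm identity becomes
`d |q|² = 2 q₀`. Hence `q₀ ≥ 0`, and `q₀² ≤ |q|² = 2 q₀ / d` gives `q₀ ≤ 2 / d`.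
-/

noncomputable section

variable {V : Type*}

open Finset Quaternion

namespace Quaternion

theorem normSq_sub_one {R : Type*} [CommRing R] (x : ℍ[R]) :
    normSq (x - 1) = normSq x - 2 * x.re + 1 := by
  simp only [normSq_def', re_sub, imI_sub, imJ_sub, imK_sub, re_one, imI_one, imJ_one, imK_one]
  ring

theorem re_sq_le_normSq {R : Type*} [CommRing R] [LinearOrder R] [IsStrictOrderedRing R]
    (x : ℍ[R]) : x.re ^ 2 ≤ normSq x := by
  rw [normSq_def']
  nlinarith [sq_nonneg x.imI, sq_nonneg x.imJ, sq_nonneg x.imK]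

theorem re_nonneg_and_le_of_mul_normSq_eq {R : Type*} [Field R] [LinearOrder R]
    [IsStrictOrderedRing R] {x : ℍ[R]} {d : R} (hd : 0 < d)
    (h : d * normSq x = 2 * x.re) : 0 ≤ x.re ∧ x.re ≤ 2 / d := by
  have hre : 0 ≤ x.re := by nlinarith [normSq_nonneg (a := x)]
  refine ⟨hre, (le_div_iff₀ hd).2 ?_⟩
  have hsq : d * x.re ^ 2 ≤ 2 * x.re := h ▸ mul_le_mul_of_nonneg_left (re_sq_le_normSq x) hd.le
  -- divide `hsq` by `q₀`; the case `q₀ = 0` is trivial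
  nlinarith

end Quaternion

theorem Matrix.sum_normSq_eq_one_of_mul_star_eq_one {ι R : Type*} [Fintype ι] [DecidableEq ι]
    [CommRing R] {A : Matrix ι ι ℍ[R]} (hA : A * star A = 1) (i : ι) :
    ∑ j, normSq (A i j) = 1 := by
  have hii := congr_fun₂ hA i i
  simp only [Matrix.mul_apply, Matrix.star_apply, self_mul_star, Matrix.one_apply_eq] at hii
  exact coe_injective ((map_sum (algebraMap R ℍ[R]) _ _).trans hii)

namespace SimpleGraph

variable [Fintype V] [DecidableEq V] (G : SimpleGraph V) [DecidableRel G.Adj]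

theorem dart_snd_fiber_card_eq_degree (v : V) : #{d : G.Dart | d.snd = v} = G.degree v := by
  rw [← dart_fst_fiber_card_eq_degree G v]
  refine card_nbij' Dart.symm Dart.symm ?_ ?_ (fun d _ ↦ d.symm_symm) (fun d _ ↦ d.symm_symm) <;>
    intro d hd <;> simpa using hd

theorem sum_normSq_quatTransition_row (q : G.Dart → ℍ[ℝ]) (e : G.Dart) :
    ∑ f, normSq (quatTransition G q e f) =
      normSq (q e - 1) - normSq (q e) + G.degree e.fst * normSq (q e) := by
  have hentry : ∀ f, normSq (quatTransition G q e f) =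
      (if f = e.symm then normSq (q e - 1) - normSq (q e) else 0) +
        if f.snd = e.fst then normSq (q e) else 0 := by
    intro f
    by_cases hf : f = e.symm
    · simp [quatTransition, hf]
    · by_cases hsnd : f.snd = e.fst <;> simp [quatTransition, hf, hsnd]
  rw [sum_congr rfl fun f _ ↦ hentry f, sum_add_distrib, sum_ite_eq' univ, ← sum_filter,
    sum_const, dart_snd_fiber_card_eq_degree, nsmul_eq_mul]
  simp

end SimpleGraph

theorem quatTransition_unitary_re_bounds_general [Fintype V] [DecidableEq V] (G : SimpleGraph V)
    [DecidableRel G.Adj] (q : G.Dart → Quaternion ℝ)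
    (hU : star (quatTransition G q) * quatTransition G q = 1 ∧
          quatTransition G q * star (quatTransition G q) = 1) :
    ∀ e : G.Dart, 0 ≤ (q e).re ∧ (q e).re ≤ 2 / (G.degree e.toProd.1 : ℝ) := by
  intro e
  have hrow := Matrix.sum_normSq_eq_one_of_mul_star_eq_one hU.2 e
  rw [G.sum_normSq_quatTransition_row, normSq_sub_one] at hrow
  have hdeg : (0 : ℝ) < G.degree e.fst :=
    Nat.cast_pos.2 ((G.degree_pos_iff_exists_adj _).2 ⟨_, e.adj⟩)
  exact re_nonneg_and_le_of_mul_normSq_eq hdeg (by linarith)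

/-- if the quaternionic transition matrix U is quaternionic unitary, then
for every arc e the real part q₀(e) of q(e) satisfies 0 ≤ q₀(e) ≤ 2/d_{o(e)}. -/
theorem quatTransition_unitary_re_bounds [Fintype V] [DecidableEq V] (G : SimpleGraph V)
    [DecidableRel G.Adj] (hG : G.Connected) (q : G.Dart → Quaternion ℝ)
    (hU : star (quatTransition G q) * quatTransition G q = 1 ∧
          quatTransition G q * star (quatTransition G q) = 1) :
    ∀ e : G.Dart, 0 ≤ (q e).re ∧ (q e).re ≤ 2 / (G.degree e.toProd.1 : ℝ) :=
  quatTransition_unitary_re_bounds_general G q hU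
end
end

section
/- Let G be a finite connected simple graph, q : D(G) → ℍ a map such that q(e) is a positive real number for every arc e ∈ D(G), and let U be the quaternionic transition matrix determined by q. If U is quaternionic unitary, then q(e) = 2/d_{o(e)} for every e ∈ D(G); that is, U equals the Grover matrix of G. -/
noncomputable section

variable {V : Type*}

open Finset in
theorem dart_snd_fiber_card_eq_degree' [Fintype V] [DecidableEq V] (G : SimpleGraph V)
    [DecidableRel G.Adj] (v : V) :
    #{d : G.Dart | d.toProd.2 = v} = G.degree v := by
  rw [← G.dart_fst_fiber_card_eq_degree v]
  apply Finset.card_bij (fun f _ => f.symm)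
  · intro a ha
    simp_all [SimpleGraph.Dart.symm]
  · intro a _ b _ hab
    simpa using congrArg SimpleGraph.Dart.symm hab
  · intro b hb
    refine ⟨b.symm, ?_, by simp⟩
    simp_all [SimpleGraph.Dart.symm]

/-- if q(e) is a positive real for every arc e and the quaternionic
transition matrix U is quaternionic unitary, then q(e) = 2/d_{o(e)} for every e, i.e.
U is the Grover matrix. -/
theorem quatTransition_unitary_positive_real_is_grover [Fintype V] [DecidableEq V]
    (G : SimpleGraph V) [DecidableRel G.Adj] (hG : G.Connected)
    (q : G.Dart → Quaternion ℝ)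
    (hpos : ∀ e : G.Dart, ∃ r : ℝ, 0 < r ∧ q e = algebraMap ℝ (Quaternion ℝ) r)
    (hU : star (quatTransition G q) * quatTransition G q = 1 ∧
          quatTransition G q * star (quatTransition G q) = 1) :
    (∀ e : G.Dart, q e = algebraMap ℝ (Quaternion ℝ) (2 / (G.degree e.toProd.1 : ℝ))) ∧
    quatTransition G q =
      quatTransition G (fun e => algebraMap ℝ (Quaternion ℝ) (2 / (G.degree e.toProd.1 : ℝ))) := by
  have key : ∀ e : G.Dart, q e = algebraMap ℝ (Quaternion ℝ) (2 / (G.degree e.toProd.1 : ℝ)) := by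
    intro e
    obtain ⟨r, hr, hqe⟩ := hpos e
    -- the real-valued entries of row e
    set g : G.Dart → ℝ := fun f =>
      if f = e.symm then r - 1 else if f.toProd.2 = e.toProd.1 then r else 0 with hg
    have hentry : ∀ f, quatTransition G q e f = algebraMap ℝ (Quaternion ℝ) (g f) := by
      intro f
      simp only [quatTransition, hg]
      split_ifs <;> simp [hqe]
    have hrow := congrArg (fun M : Matrix G.Dart G.Dart (Quaternion ℝ) => M e e) hU.2
    simp only [Matrix.mul_apply, Matrix.star_apply, Matrix.one_apply_eq, hentry] at hrow
    have hsum : (∑ f, (g f * g f : ℝ)) = 1 := by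
      apply (algebraMap ℝ (Quaternion ℝ)).injective
      rw [map_one, ← hrow, map_sum]
      exact Finset.sum_congr rfl fun f _ => by
        simp [QuaternionAlgebra.coe_algebraMap, QuaternionAlgebra.star_coe]
    -- compute the sum
    have hmemS : ∀ f : G.Dart, f = e.symm → f.toProd.2 = e.toProd.1 := by
      rintro f rfl; simp [SimpleGraph.Dart.symm]
    set S : Finset G.Dart := {d : G.Dart | d.toProd.2 = e.toProd.1} with hS
    have heS : e.symm ∈ S := by
      simp only [hS, Finset.mem_filter, Finset.mem_univ, true_and]
      exact hmemS _ rfl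
    have hsum2 : (∑ f, (g f * g f : ℝ)) = ∑ f ∈ S, g f * g f := by
      apply (Finset.sum_subset (Finset.subset_univ S) ?_).symm
      intro f _ hf
      have h1 : ¬ f.toProd.2 = e.toProd.1 := by
        simpa [hS, Finset.mem_filter] using hf
      have h2 : f ≠ e.symm := fun h => h1 (hmemS f h)
      simp [hg, h1, h2]
    have hsum3 : ∑ f ∈ S, g f * g f = (r - 1) * (r - 1) + (S.card - 1 : ℕ) * (r * r) := by
      rw [← Finset.add_sum_erase S _ heS]
      have : ∀ f ∈ S.erase e.symm, g f * g f = r * r := by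
        intro f hf
        obtain ⟨hne, hfS⟩ := Finset.mem_erase.mp hf
        have : f.toProd.2 = e.toProd.1 := by simpa [hS, Finset.mem_filter] using hfS
        simp [hg, hne, this]
      rw [Finset.sum_congr rfl this, Finset.sum_const, Finset.card_erase_of_mem heS]
      simp [hg, nsmul_eq_mul]
    have hcard : S.card = G.degree e.toProd.1 := dart_snd_fiber_card_eq_degree' G e.toProd.1
    have hd1 : 1 ≤ S.card := Finset.card_pos.mpr ⟨e.symm, heS⟩
    -- real equation
    set d : ℕ := S.card with hdd
    have heq : (r - 1) * (r - 1) + ((d : ℝ) - 1) * (r * r) = 1 := by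
      have h0 : (r - 1) * (r - 1) + ((d - 1 : ℕ) : ℝ) * (r * r) = 1 := by
        rw [← hsum3, ← hsum2]; exact hsum
      rwa [Nat.cast_sub hd1, Nat.cast_one] at h0
    have hdpos : (0 : ℝ) < (d : ℝ) := by exact_mod_cast hd1
    have hreq : r = 2 / (d : ℝ) := by
      have h2 : (d : ℝ) * r * r = 2 * r := by nlinarith [heq]
      have h3 : (d : ℝ) * r = 2 := mul_right_cancel₀ (ne_of_gt hr) h2
      field_simp
      linarith [h3]
    rw [hqe, hreq, ← hcard]
  refine ⟨key, ?_⟩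
  have : q = fun e => algebraMap ℝ (Quaternion ℝ) (2 / (G.degree e.toProd.1 : ℝ)) := funext key
  rw [this]
end
end

section
/- Let G be a finite connected simple graph with n vertices and m edges, A its adjacency matrix, D the diagonal degree matrix, B the arc-adjacency matrix and J₀ the arc-inversion matrix. Then for every t ∈ ℂ, det(I_{2m} − t·(B − J₀)) = (1 − t²)^{m−n} · det(I_n − t·A + t²·(D − I_n)). (This is the equality of the Hashimoto-type and Bass-type determinant expressions for the reciprocal of the Ihara zeta function of G, where the Betti number r satisfies r − 1 = m − n.) -/
/-!
With the origin incidence matrix `S` (`S v e = [o(e) = v]`) and the terminal incidence matrix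
`T` (`T e v = [t(e) = v]`) one has `B = T S`, `J₀ T = Sᵀ`, `S T = A`, `S Sᵀ = D` and `J₀² = 1`.
Hence `(1 - t J₀)(1 - t(B - J₀)) = (1 - t²) 1 - t (T - t Sᵀ) S`, and Sylvester's determinant
identity trades this `2m × 2m` determinant for that of `(1 - t²) 1 - t A + t² D`. Since
`J₀` pairs each dart with its reverse, `det (1 - t J₀) = (1 - t²)^m`. This gives the identity
multiplied by `(1 - t²)^m`; the factor cancels for `t ≠ ±1`, and continuity covers `t = ±1`.
-/

noncomputable section

variable {V : Type*}

/-- The arc-adjacency matrix B: `B e f = 1` if `t(e) = o(f)`, else 0. -/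
def arcAdjMatrix [Fintype V] [DecidableEq V] (G : SimpleGraph V) [DecidableRel G.Adj] :
    Matrix G.Dart G.Dart ℂ := fun e f =>
  if e.toProd.2 = f.toProd.1 then 1 else 0

/-- The arc-inversion matrix J₀: `(J₀) e f = 1` if `f = e⁻¹`, else 0. -/
def arcInvMatrix [Fintype V] [DecidableEq V] (G : SimpleGraph V) [DecidableRel G.Adj] :
    Matrix G.Dart G.Dart ℂ := fun e f =>
  if f = e.symm then 1 else 0

/-- The diagonal degree matrix D. -/
def degMatrix [Fintype V] [DecidableEq V] (G : SimpleGraph V) [DecidableRel G.Adj] :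
    Matrix V V ℂ :=
  Matrix.diagonal fun u => (G.degree u : ℂ)

open Matrix

theorem Matrix.det_smul_one_sub_mul_comm {R m n : Type*} [CommRing R] [Fintype m] [Fintype n]
    [DecidableEq m] [DecidableEq n] (A : Matrix m n R) (B : Matrix n m R) (a : R) :
    a ^ Fintype.card n * (a • 1 - A * B).det = a ^ Fintype.card m * (a • 1 - B * A).det := by
  have := congrArg (Polynomial.eval a) (charpoly_mul_comm' A B)
  simpa only [Polynomial.eval_mul, Polynomial.eval_pow, Polynomial.eval_X, eval_charpoly,
    scalar_apply, smul_one_eq_diagonal] using this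

theorem Continuous.ext_of_one_sub_sq_ne_zero {f g : ℂ → ℂ} (hf : Continuous f)
    (hg : Continuous g) (h : ∀ t, 1 - t ^ 2 ≠ 0 → f t = g t) : f = g := by
  have hroots : {t : ℂ | 1 - t ^ 2 ≠ 0}ᶜ.Countable :=
    (Set.countable_insert.2 (Set.countable_singleton (-1))).mono fun t ht =>
      or_iff_not_imp_left.2 (by simpa [sub_eq_zero, eq_comm (a := (1 : ℂ))] using ht)
  exact hf.ext_on (hroots.dense_compl ℂ) hg fun t ht => h t (by simpa using ht)

theorem SimpleGraph.exists_finTwoProdEdgeSet_equiv_dart (G : SimpleGraph V) :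
    ∃ φ : Fin 2 × G.edgeSet ≃ G.Dart,
      (∀ p, (φ p).edge = p.2) ∧ ∀ e, φ (1, e) = (φ (0, e)).symm := by
  have hsurj : ∀ e : G.edgeSet, ∃ d : G.Dart, d.edge = e := by
    rintro ⟨e, he⟩
    induction e using Sym2.ind with
    | h u v => exact ⟨⟨(u, v), he⟩, rfl⟩
  choose out hout using hsurj
  let φ : Fin 2 × G.edgeSet → G.Dart := fun p => ![out p.2, (out p.2).symm] p.1
  have hφ_edge : ∀ p, (φ p).edge = p.2 := fun ⟨i, e⟩ => by
    fin_cases i <;> simp [φ, hout]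
  have hφ : Function.Bijective φ := by
    refine ⟨fun p q hpq => ?_, fun d => ?_⟩
    · have he : p.2 = q.2 := Subtype.ext (by rw [← hφ_edge, hpq, hφ_edge])
      obtain ⟨i, e⟩ := p
      obtain ⟨j, e'⟩ := q
      subst he
      fin_cases i <;> fin_cases j <;> simp_all [φ, SimpleGraph.Dart.symm_ne, Ne.symm]
    · let e : G.edgeSet := ⟨d.edge, d.edge_mem⟩
      obtain h | h := (G.dart_edge_eq_iff d (out e)).1 (hout e).symm
      exacts [⟨(0, e), h.symm⟩, ⟨(1, e), h.symm⟩]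
  exact ⟨Equiv.ofBijective φ hφ, hφ_edge, fun _ => rfl⟩

section DartMatrices

variable [Fintype V] [DecidableEq V] (G : SimpleGraph V) [DecidableRel G.Adj]

def dartOriginMatrix : Matrix V G.Dart ℂ := fun v e => if e.fst = v then 1 else 0

def dartTerminalMatrix : Matrix G.Dart V ℂ := fun e v => if e.snd = v then 1 else 0

theorem dartTerminalMatrix_mul_dartOriginMatrix :
    dartTerminalMatrix G * dartOriginMatrix G = arcAdjMatrix G := by
  ext e f
  simp [mul_apply, dartTerminalMatrix, dartOriginMatrix, arcAdjMatrix, eq_comm]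

theorem arcInvMatrix_mul_self : arcInvMatrix G * arcInvMatrix G = 1 := by
  ext e f
  rw [mul_apply, Fintype.sum_eq_single e.symm fun d hd => by simp [arcInvMatrix, hd]]
  simp [arcInvMatrix, one_apply, eq_comm]

theorem arcInvMatrix_mul_dartTerminalMatrix :
    arcInvMatrix G * dartTerminalMatrix G = (dartOriginMatrix G)ᵀ := by
  ext e v
  rw [mul_apply, Fintype.sum_eq_single e.symm fun d hd => by simp [arcInvMatrix, hd]]
  simp [arcInvMatrix, dartTerminalMatrix, dartOriginMatrix]

theorem dartOriginMatrix_mul_dartTerminalMatrix :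
    dartOriginMatrix G * dartTerminalMatrix G = G.adjMatrix ℂ := by
  ext u v
  simp only [mul_apply, dartOriginMatrix, dartTerminalMatrix, SimpleGraph.adjMatrix_apply,
    boole_mul, ← ite_and, Finset.sum_boole]
  by_cases h : G.Adj u v
  · rw [if_pos h, Finset.card_eq_one.2 ⟨⟨(u, v), h⟩, by
      ext d; simp [SimpleGraph.Dart.ext_iff, Prod.ext_iff]⟩, Nat.cast_one]
  · rw [if_neg h, Nat.cast_eq_zero, Finset.card_eq_zero, Finset.filter_eq_empty_iff]
    rintro d - ⟨rfl, rfl⟩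
    exact h d.adj

theorem dartOriginMatrix_mul_transpose :
    dartOriginMatrix G * (dartOriginMatrix G)ᵀ = degMatrix G := by
  ext u v
  simp only [mul_apply, transpose_apply, dartOriginMatrix, degMatrix, diagonal_apply,
    boole_mul, ← ite_and, Finset.sum_boole]
  by_cases h : u = v
  · subst h
    simp [G.dart_fst_fiber_card_eq_degree]
  · rw [if_neg h, Nat.cast_eq_zero, Finset.card_eq_zero, Finset.filter_eq_empty_iff]
    rintro d - ⟨rfl, rfl⟩
    exact h rfl

theorem det_one_sub_smul_arcInvMatrix (t : ℂ) :
    (1 - t • arcInvMatrix G).det = (1 - t ^ 2) ^ G.edgeFinset.card := by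
  obtain ⟨φ, hφ_edge, hφ_flip⟩ := G.exists_finTwoProdEdgeSet_equiv_dart
  have hblock : (1 - t • arcInvMatrix G).submatrix φ φ =
      blockDiagonal fun _ => !![1, -t; -t, 1] := by
    ext ⟨i, e⟩ ⟨j, e'⟩
    rw [submatrix_apply, blockDiagonal_apply]
    by_cases h : e = e'
    · subst h
      have h₀ := (φ (0, e)).symm_ne
      fin_cases i <;> fin_cases j <;> simp [hφ_flip, arcInvMatrix, one_apply, h₀, h₀.symm]
    · have h₁ : φ (i, e) ≠ φ (j, e') := fun hij => h (Prod.ext_iff.1 (φ.injective hij)).2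
      have h₂ : φ (j, e') ≠ (φ (i, e)).symm := fun hij => h <| Subtype.ext <| by
        rw [← hφ_edge (i, e), ← SimpleGraph.Dart.edge_symm, ← hij, hφ_edge]
      simp [arcInvMatrix, one_apply, h, h₁, h₂]
  rw [← det_submatrix_equiv_self φ, hblock, det_blockDiagonal, Finset.prod_const,
    Finset.card_univ, SimpleGraph.card_edgeSet, det_fin_two_of]
  ring

theorem one_sub_smul_arcInvMatrix_mul (t : ℂ) :
    (1 - t • arcInvMatrix G) * (1 - t • (arcAdjMatrix G - arcInvMatrix G)) =
      (1 - t ^ 2) • 1 - (t • (dartTerminalMatrix G - t • (dartOriginMatrix G)ᵀ)) *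
        dartOriginMatrix G := by
  rw [← dartTerminalMatrix_mul_dartOriginMatrix, ← arcInvMatrix_mul_dartTerminalMatrix]
  simp only [Matrix.sub_mul, Matrix.mul_sub, Matrix.smul_mul, Matrix.mul_smul, Matrix.one_mul,
    Matrix.mul_one, Matrix.mul_assoc, arcInvMatrix_mul_self]
  module

theorem dartOriginMatrix_mul_smul_sub (t : ℂ) :
    dartOriginMatrix G * (t • (dartTerminalMatrix G - t • (dartOriginMatrix G)ᵀ)) =
      t • G.adjMatrix ℂ - t ^ 2 • degMatrix G := by
  rw [Matrix.mul_smul, Matrix.mul_sub, Matrix.mul_smul, dartOriginMatrix_mul_dartTerminalMatrix,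
    dartOriginMatrix_mul_transpose]
  module

theorem ihara_bass_mul_one_sub_sq_pow (t : ℂ) :
    (1 - t ^ 2) ^ G.edgeFinset.card * ((1 - t ^ 2) ^ Fintype.card V *
        (1 - t • (arcAdjMatrix G - arcInvMatrix G)).det) =
      (1 - t ^ 2) ^ G.edgeFinset.card * ((1 - t ^ 2) ^ G.edgeFinset.card *
        (1 - t • G.adjMatrix ℂ + t ^ 2 • (degMatrix G - 1)).det) := by
  set a := 1 - t ^ 2
  set m := G.edgeFinset.card
  calc a ^ m * (a ^ Fintype.card V * (1 - t • (arcAdjMatrix G - arcInvMatrix G)).det)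
      = a ^ Fintype.card V *
          (a • 1 - (t • (dartTerminalMatrix G - t • (dartOriginMatrix G)ᵀ)) *
            dartOriginMatrix G).det := by
        rw [← one_sub_smul_arcInvMatrix_mul, det_mul, det_one_sub_smul_arcInvMatrix]
        ring
    _ = a ^ (2 * m) * (a • 1 - (t • G.adjMatrix ℂ - t ^ 2 • degMatrix G)).det := by
        rw [det_smul_one_sub_mul_comm, dartOriginMatrix_mul_smul_sub,
          G.dart_card_eq_twice_card_edges]
    _ = a ^ m * (a ^ m * (1 - t • G.adjMatrix ℂ + t ^ 2 • (degMatrix G - 1)).det) := by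
        rw [two_mul, pow_add, mul_assoc]
        congr 3
        module

end DartMatrices

theorem ihara_bass_determinant_general [Fintype V] [DecidableEq V] (G : SimpleGraph V)
    [DecidableRel G.Adj] (n m : ℕ) (hn : n = Fintype.card V)
    (hm : m = G.edgeFinset.card) :
    ∀ t : ℂ,
      (1 - t ^ 2) ^ n *
          ((1 : Matrix G.Dart G.Dart ℂ) - t • (arcAdjMatrix G - arcInvMatrix G)).det =
        (1 - t ^ 2) ^ m *
          ((1 : Matrix V V ℂ) - t • (G.adjMatrix ℂ) +
            t ^ 2 • (degMatrix G - 1)).det := by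
  subst hn hm
  refine congrFun (Continuous.ext_of_one_sub_sq_ne_zero (by fun_prop) (by fun_prop)
    fun t ht => ?_)
  exact mul_left_cancel₀ (pow_ne_zero _ ht) (ihara_bass_mul_one_sub_sq_pow G t)

/-- Hashimoto; Bass: for a finite connected simple graph with n vertices and
m edges, det(I_{2m} − t(B − J₀)) = (1−t²)^{m−n}·det(I_n − tA + t²(D − I_n)), where
r − 1 = m − n is the Betti number minus one (stated multiplied through by (1−t²)^n to
avoid negative exponents). -/
theorem ihara_bass_determinant [Fintype V] [DecidableEq V] (G : SimpleGraph V)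
    [DecidableRel G.Adj] (hG : G.Connected) (n m : ℕ) (hn : n = Fintype.card V)
    (hm : m = G.edgeFinset.card) :
    ∀ t : ℂ,
      (1 - t ^ 2) ^ n *
          ((1 : Matrix G.Dart G.Dart ℂ) - t • (arcAdjMatrix G - arcInvMatrix G)).det =
        (1 - t ^ 2) ^ m *
          ((1 : Matrix V V ℂ) - t • (G.adjMatrix ℂ) +
            t ^ 2 • (degMatrix G - 1)).det :=
  ihara_bass_determinant_general G n m hn hm
end
end

section
/- Let G be a finite connected simple graph with n vertices and m edges, W a complex weighted matrix of G, B_w the weighted arc matrix, J₀ the arc-inversion matrix, and D_w the weighted degree matrix. Then for every t ∈ ℂ, det(I_{2m} − t·(ᵀB_w − J₀)) = (1 − t²)^{m−n} · det(I_n − t·ᵀW + t²·(D_w − I_n)), where ᵀM denotes the transpose of M. -/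
/-!
Let `S`, `T` be the vertex–dart incidence matrices of origins and terminals and
`C e u = [o(e) = u] w(e)`. Then `ᵀB_w = C T`, `T J₀ = S`, `J₀² = I`, `T C = ᵀW` and
`S C = D_w`, so `(I - t(ᵀB_w - J₀))(I - tJ₀) = (1 - t²) I - C (tT - t²S)`, and Sylvester's
determinant identity trades `C (tT - t²S)` for `(tT - t²S) C = tᵀW - t²D_w`. Listing the darts
as one orientation of each edge followed by the reverses puts `J₀` in the block form
`[[0, I], [I, 0]]`, whence `det(I - tJ₀) = (1 - t²)^m`. Cancelling this factor proves the
identity for `t ≠ ±1`, and both sides are continuous in `t`.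
-/

noncomputable section

open Finset Matrix

variable {V : Type*}

/-- The weighted arc matrix B_w: `(B_w) e f = w(f) = W_{o(f) t(f)}` if `t(e) = o(f)`, else 0. -/
def weightedArcMatrix [Fintype V] [DecidableEq V] (G : SimpleGraph V) [DecidableRel G.Adj]
    (W : Matrix V V ℂ) : Matrix G.Dart G.Dart ℂ := fun e f =>
  if e.toProd.2 = f.toProd.1 then W f.toProd.1 f.toProd.2 else 0

/-- The weighted degree matrix D_w: diagonal, with `(D_w)_{uu} = Σ_{e : o(e) = u} w(e)`. -/
def weightedDegMatrix [Fintype V] [DecidableEq V] (G : SimpleGraph V) [DecidableRel G.Adj]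
    (W : Matrix V V ℂ) : Matrix V V ℂ :=
  Matrix.diagonal fun u =>
    ∑ e : G.Dart, if e.toProd.1 = u then W e.toProd.1 e.toProd.2 else 0

namespace Matrix

variable {R ι κ m n : Type*} [CommRing R]

theorem pow_card_mul_det_smul_one_sub_mul_comm [Fintype m] [Fintype n] [DecidableEq m]
    [DecidableEq n] (a : R) (A : Matrix m n R) (B : Matrix n m R) :
    a ^ Fintype.card n * (a • 1 - A * B).det = a ^ Fintype.card m * (a • 1 - B * A).det := by
  simpa [eval_charpoly, smul_one_eq_diagonal] using
    congrArg (Polynomial.eval a) (charpoly_mul_comm' A B)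

theorem det_one_sub_smul_of_submatrix_eq_fromBlocks [Fintype ι] [DecidableEq ι] [Fintype κ]
    [DecidableEq κ] (e : κ ⊕ κ ≃ ι) {J : Matrix ι ι R}
    (hJ : J.submatrix e e = fromBlocks 0 1 1 0) (t : R) :
    (1 - t • J).det = (1 - t ^ 2) ^ Fintype.card κ := by
  have hblocks : (1 - t • J).submatrix e e = fromBlocks 1 (-t • 1) (-t • 1) 1 := by
    have hsub : (1 - t • J).submatrix e e = 1 - t • J.submatrix e e := by
      ext i j; simp [one_apply]
    rw [hsub, hJ, ← fromBlocks_one, fromBlocks_smul, sub_eq_add_neg, fromBlocks_neg,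
      fromBlocks_add]
    simp
  have hschur : (1 : Matrix κ κ R) - (-t • 1) * (-t • 1) = (1 - t ^ 2) • 1 := by
    simp [sub_smul, sq, smul_smul]
  rw [← det_submatrix_equiv_self e, hblocks, det_fromBlocks_one₁₁, hschur, det_smul, det_one,
    mul_one]

end Matrix

namespace SimpleGraph

variable [Fintype V] [DecidableEq V] (G : SimpleGraph V) [DecidableRel G.Adj] (W : Matrix V V ℂ)

def dartOriginMatrix : Matrix V G.Dart ℂ := fun u e => if e.fst = u then 1 else 0

def dartTerminusMatrix : Matrix V G.Dart ℂ := fun u e => if e.snd = u then 1 else 0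

def weightedDartOriginMatrix : Matrix G.Dart V ℂ := fun e u =>
  if e.fst = u then W e.fst e.snd else 0

theorem transpose_weightedArcMatrix :
    (weightedArcMatrix G W)ᵀ = G.weightedDartOriginMatrix W * G.dartTerminusMatrix := by
  ext e f
  simp [weightedArcMatrix, weightedDartOriginMatrix, dartTerminusMatrix, mul_apply, eq_comm]

theorem dartTerminusMatrix_mul_arcInvMatrix :
    G.dartTerminusMatrix * arcInvMatrix G = G.dartOriginMatrix := by
  ext u f
  simp [dartTerminusMatrix, arcInvMatrix, dartOriginMatrix, mul_apply,
    ← Dart.symm_involutive.eq_iff]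

theorem arcInvMatrix_mul_self : arcInvMatrix G * arcInvMatrix G = 1 := by
  ext e f
  simp [arcInvMatrix, mul_apply, one_apply, ← Dart.symm_involutive.eq_iff, eq_comm (a := e)]

theorem dartOriginMatrix_mul_weightedDartOriginMatrix :
    G.dartOriginMatrix * G.weightedDartOriginMatrix W = weightedDegMatrix G W := by
  ext u v
  simp only [dartOriginMatrix, weightedDartOriginMatrix, weightedDegMatrix, mul_apply,
    diagonal_apply, ite_mul, one_mul, zero_mul, ← ite_and]
  rcases eq_or_ne u v with rfl | huv
  · simp
  · rw [if_neg huv]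
    exact Fintype.sum_eq_zero _ fun d => if_neg fun ⟨hu, hv⟩ => huv (hu.symm.trans hv)

theorem dartTerminusMatrix_mul_weightedDartOriginMatrix (hW : ∀ u v, ¬G.Adj u v → W u v = 0) :
    G.dartTerminusMatrix * G.weightedDartOriginMatrix W = Wᵀ := by
  ext u v
  simp only [dartTerminusMatrix, weightedDartOriginMatrix, mul_apply, ite_mul, one_mul, zero_mul,
    transpose_apply, ← ite_and]
  by_cases h : G.Adj v u
  · rw [Fintype.sum_eq_single ⟨(v, u), h⟩ fun d hd =>
      if_neg fun ⟨hu, hv⟩ => hd (Dart.ext _ _ (Prod.ext hv hu))]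
    simp
  · rw [hW v u h]
    exact Fintype.sum_eq_zero _ fun d => if_neg fun ⟨hu, hv⟩ => h (hu ▸ hv ▸ d.adj)

theorem det_one_sub_smul_arcInvMatrix (t : ℂ) :
    (1 - t • arcInvMatrix G).det = (1 - t ^ 2) ^ #G.edgeFinset := by
  -- `P` orients each edge by an enumeration of `V`; `e` lists the oriented darts, then their
  -- reverses.
  let σ := Fintype.equivFin V
  let P : G.Dart → Prop := fun d => σ d.fst < σ d.snd
  have hP : ∀ d : G.Dart, P d ↔ ¬P d.symm := fun d => by
    have := σ.injective.ne d.fst_ne_snd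
    simp only [P, Dart.symm_toProd, Prod.fst_swap, Prod.snd_swap]
    omega
  let e : {d // P d} ⊕ {d // P d} ≃ G.Dart :=
    ((Equiv.refl _).sumCongr (Dart.symm_involutive.toPerm.subtypeEquiv hP)).trans
      (Equiv.sumCompl P)
  have hcard : Fintype.card {d // P d} = #G.edgeFinset := by
    have := Fintype.card_congr e
    rw [Fintype.card_sum, dart_card_eq_twice_card_edges] at this
    omega
  rw [← hcard]
  refine Matrix.det_one_sub_smul_of_submatrix_eq_fromBlocks e ?_ t
  have he : ∀ a, e (.inl a) = a.1 ∧ e (.inr a) = a.1.symm := fun a => ⟨rfl, rfl⟩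
  have hne : ∀ a b : {d // P d}, b.1 ≠ a.1.symm := fun a b h => (hP a).1 a.2 (h ▸ b.2)
  ext (a | a) (b | b) <;>
    simp [he, arcInvMatrix, hne, one_apply, Subtype.ext_iff, Dart.symm_involutive.eq_iff,
      eq_comm (a := b.1)]

theorem one_sub_smul_mul_one_sub_smul_arcInvMatrix (t : ℂ) :
    (1 - t • ((weightedArcMatrix G W)ᵀ - arcInvMatrix G)) * (1 - t • arcInvMatrix G) =
      (1 - t ^ 2) • 1 - G.weightedDartOriginMatrix W *
        (t • G.dartTerminusMatrix - t ^ 2 • G.dartOriginMatrix) := by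
  rw [transpose_weightedArcMatrix]
  simp only [Matrix.mul_sub, Matrix.sub_mul, Matrix.mul_smul, Matrix.smul_mul, Matrix.mul_one,
    Matrix.one_mul, Matrix.mul_assoc, dartTerminusMatrix_mul_arcInvMatrix, arcInvMatrix_mul_self]
  module

theorem weighted_bass_identity (hW : ∀ u v, ¬G.Adj u v → W u v = 0) (t : ℂ) :
    (1 - t ^ 2) ^ Fintype.card V *
        (1 - t • ((weightedArcMatrix G W)ᵀ - arcInvMatrix G)).det *
          (1 - t ^ 2) ^ #G.edgeFinset =
      (1 - t ^ 2) ^ (2 * #G.edgeFinset) *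
        (1 - t • Wᵀ + t ^ 2 • (weightedDegMatrix G W - 1)).det := by
  have hcomm : (t • G.dartTerminusMatrix - t ^ 2 • G.dartOriginMatrix) *
      G.weightedDartOriginMatrix W = t • Wᵀ - t ^ 2 • weightedDegMatrix G W := by
    rw [Matrix.sub_mul, Matrix.smul_mul, Matrix.smul_mul,
      dartTerminusMatrix_mul_weightedDartOriginMatrix G W hW,
      dartOriginMatrix_mul_weightedDartOriginMatrix]
  rw [← det_one_sub_smul_arcInvMatrix G t, mul_assoc, ← det_mul,
    one_sub_smul_mul_one_sub_smul_arcInvMatrix, pow_card_mul_det_smul_one_sub_mul_comm, hcomm,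
    dart_card_eq_twice_card_edges]
  congr 2
  module

end SimpleGraph

theorem second_weighted_zeta_determinant_transpose_general [Fintype V] [DecidableEq V]
    (G : SimpleGraph V) [DecidableRel G.Adj] (n m : ℕ)
    (hn : n = Fintype.card V) (hm : m = G.edgeFinset.card) (W : Matrix V V ℂ)
    (hW : ∀ u v : V, ¬G.Adj u v → W u v = 0) :
    ∀ t : ℂ,
      (1 - t ^ 2) ^ n *
          ((1 : Matrix G.Dart G.Dart ℂ) -
            t • ((weightedArcMatrix G W)ᵀ - arcInvMatrix G)).det =
        (1 - t ^ 2) ^ m *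
          ((1 : Matrix V V ℂ) - t • Wᵀ + t ^ 2 • (weightedDegMatrix G W - 1)).det := by
  subst hn hm
  have hdense : Dense {s : ℂ | 1 - s ^ 2 = 0}ᶜ := by
    refine Set.Countable.dense_compl ℂ
      ((Set.toFinite {1, -1}).subset fun s (hs : 1 - s ^ 2 = 0) => ?_).countable
    have hsq : s * s = 1 := by linear_combination -hs
    simpa using mul_self_eq_one_iff.1 hsq
  refine congrFun (Continuous.ext_on hdense (by fun_prop) (by fun_prop) fun s hs => ?_)
  refine mul_right_cancel₀ (pow_ne_zero #G.edgeFinset hs) ?_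
  rw [G.weighted_bass_identity W hW s, two_mul, pow_add]
  ring

/-- the transposed Bass-type determinant expression:
det(I_{2m} − t(ᵀB_w − J₀)) = (1−t²)^{m−n}·det(I_n − tᵀW + t²(D_w − I_n))
(stated multiplied through by (1−t²)^n to avoid negative exponents). -/
theorem second_weighted_zeta_determinant_transpose [Fintype V] [DecidableEq V]
    (G : SimpleGraph V) [DecidableRel G.Adj] (hG : G.Connected) (n m : ℕ)
    (hn : n = Fintype.card V) (hm : m = G.edgeFinset.card) (W : Matrix V V ℂ)
    (hW : ∀ u v : V, ¬G.Adj u v → W u v = 0) :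
    ∀ t : ℂ,
      (1 - t ^ 2) ^ n *
          ((1 : Matrix G.Dart G.Dart ℂ) -
            t • ((weightedArcMatrix G W)ᵀ - arcInvMatrix G)).det =
        (1 - t ^ 2) ^ m *
          ((1 : Matrix V V ℂ) - t • Wᵀ + t ^ 2 • (weightedDegMatrix G W - 1)).det :=
  second_weighted_zeta_determinant_transpose_general G n m hn hm W hW
end
end

section
/- Let G be a finite connected simple graph, w : D(G) → ℍ an arc weight satisfying the unitarity condition that w(e) = w(f) whenever o(e) = o(f), and let W and D_w be the quaternionic weighted matrix and weighted degree matrix. (a) If the sum Σ_{e : o(e) = u} w(e) is independent of the vertex u, then ᵀW·D_w = D_w·ᵀW. (b) Conversely, if in addition w(e) ≠ 0 for every arc e ∈ D(G), then ᵀW·D_w = D_w·ᵀW implies that Σ_{e : o(e) = u} w(e) is independent of u. -/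
/-! Under the unitarity condition all arcs leaving a vertex carry the same weight, so each
weight `w e` commutes with the weighted degree `d(o e)` at its origin. The `(u, v)` entries of
`ᵀW D_w` and `D_w ᵀW` are then `d(o e) w e` and `d(t e) w e` for the arc `e = (v, u)`: they
agree when `d` is constant, and conversely nonzero weights cancel, making `d` constant along
edges and hence, by connectedness, everywhere. -/

noncomputable section

open Matrix

variable {V : Type*}

/-- The quaternionic weighted matrix W: `W u v = w((u,v))` if `(u,v)` is an arc, else 0. -/
def quatWeightMatrix [Fintype V] [DecidableEq V] (G : SimpleGraph V) [DecidableRel G.Adj]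
    (w : G.Dart → Quaternion ℝ) : Matrix V V (Quaternion ℝ) := fun u v =>
  if h : G.Adj u v then w ⟨(u, v), h⟩ else 0

/-- The quaternionic weighted degree matrix D_w: diagonal with
`(D_w)_{uu} = Σ_{e : o(e) = u} w(e)`. -/
def quatDegMatrix [Fintype V] [DecidableEq V] (G : SimpleGraph V) [DecidableRel G.Adj]
    (w : G.Dart → Quaternion ℝ) : Matrix V V (Quaternion ℝ) :=
  Matrix.diagonal fun u => ∑ e : G.Dart, if e.toProd.1 = u then w e else 0

theorem Matrix.mul_diagonal_eq_diagonal_mul_iff {n R : Type*} [Fintype n] [DecidableEq n]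
    [Semiring R] (A : Matrix n n R) (d : n → R) :
    A * diagonal d = diagonal d * A ↔ ∀ i j, A i j * d j = d i * A i j := by
  simp only [← Matrix.ext_iff, mul_diagonal, diagonal_mul]

theorem SimpleGraph.Reachable.eq_of_forall_adj {α : Type*} {G : SimpleGraph V} {f : V → α}
    (hf : ∀ u v, G.Adj u v → f u = f v) {u v : V} (h : G.Reachable u v) : f u = f v := by
  obtain ⟨p⟩ := h
  induction p with
  | nil => rfl
  | cons hadj _ ih => exact (hf _ _ hadj).trans ih

section WeightedDegree

variable [Fintype V] [DecidableEq V] {G : SimpleGraph V} [DecidableRel G.Adj]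
  {w : G.Dart → Quaternion ℝ}

variable (G w) in
def quatWeightedDegree (u : V) : Quaternion ℝ :=
  ∑ e : G.Dart, if e.toProd.1 = u then w e else 0

theorem quatDegMatrix_eq_diagonal : quatDegMatrix G w = diagonal (quatWeightedDegree G w) := rfl

theorem commute_weight_quatWeightedDegree_fst
    (hw : ∀ e f : G.Dart, e.toProd.1 = f.toProd.1 → w e = w f) (e : G.Dart) :
    Commute (w e) (quatWeightedDegree G w e.fst) := by
  refine Commute.sum_right _ _ _ fun f _ => ?_
  split_ifs with hf
  · rw [hw f e hf]
  · exact Commute.zero_right _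

theorem transpose_quatWeightMatrix_commute_quatDegMatrix_iff
    (hw : ∀ e f : G.Dart, e.toProd.1 = f.toProd.1 → w e = w f) :
    (quatWeightMatrix G w)ᵀ * quatDegMatrix G w = quatDegMatrix G w * (quatWeightMatrix G w)ᵀ ↔
      ∀ e : G.Dart, quatWeightedDegree G w e.fst * w e = quatWeightedDegree G w e.snd * w e := by
  rw [quatDegMatrix_eq_diagonal, mul_diagonal_eq_diagonal_mul_iff]
  have entry : ∀ u v, (quatWeightMatrix G w)ᵀ u v * quatWeightedDegree G w v
      = quatWeightedDegree G w u * (quatWeightMatrix G w)ᵀ u v ↔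
      ∀ h : G.Adj v u, quatWeightedDegree G w v * w ⟨(v, u), h⟩
        = quatWeightedDegree G w u * w ⟨(v, u), h⟩ := fun u v => by
    simp only [transpose_apply, quatWeightMatrix]
    split_ifs with h
    · rw [(commute_weight_quatWeightedDegree_fst hw ⟨(v, u), h⟩).eq]
      exact ⟨fun hvu _ => hvu, fun hvu => hvu h⟩
    · simp [h]
  simp only [entry]
  exact ⟨fun h e => h e.snd e.fst e.adj, fun h u v huv => h ⟨(v, u), huv⟩⟩

end WeightedDegree

/-- Proposition 6.3: let w satisfy w(e) = w(f) whenever o(e) = o(f).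
(a) If Σ_{e : o(e)=u} w(e) is independent of u, then ᵀW·D_w = D_w·ᵀW.
(b) If moreover w(e) ≠ 0 for every arc e, then ᵀW·D_w = D_w·ᵀW implies that
Σ_{e : o(e)=u} w(e) is independent of u. -/
theorem quat_commutativity_iff [Fintype V] [DecidableEq V] (G : SimpleGraph V)
    [DecidableRel G.Adj] (hG : G.Connected) (w : G.Dart → Quaternion ℝ)
    (hw : ∀ e f : G.Dart, e.toProd.1 = f.toProd.1 → w e = w f) :
    ((∀ u v : V,
        (∑ e : G.Dart, if e.toProd.1 = u then w e else 0) =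
          ∑ e : G.Dart, if e.toProd.1 = v then w e else 0) →
      (quatWeightMatrix G w)ᵀ * quatDegMatrix G w =
        quatDegMatrix G w * (quatWeightMatrix G w)ᵀ) ∧
    ((∀ e : G.Dart, w e ≠ 0) →
      (quatWeightMatrix G w)ᵀ * quatDegMatrix G w =
          quatDegMatrix G w * (quatWeightMatrix G w)ᵀ →
      ∀ u v : V,
        (∑ e : G.Dart, if e.toProd.1 = u then w e else 0) =
          ∑ e : G.Dart, if e.toProd.1 = v then w e else 0) := by
  simp only [transpose_quatWeightMatrix_commute_quatDegMatrix_iff hw]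
  refine ⟨fun hconst e => congrArg (· * w e) (hconst _ _), fun hnz hcomm u v => ?_⟩
  have adj_eq : ∀ u v, G.Adj u v → quatWeightedDegree G w u = quatWeightedDegree G w v :=
    fun u v huv => mul_right_cancel₀ (hnz ⟨(u, v), huv⟩) (hcomm ⟨(u, v), huv⟩)
  exact (hG u v).eq_of_forall_adj adj_eq
end
end
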